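/- Let q₀(x) = −x₀² + x₁² + ... + x_{n-1}² be the degenerate quadratic form on ℝ^{n+1} (not involving x_n), and let G_HP = {[A] ∈ PO(q₀) : A·e_n = ±e_n}. Then G_HP is isomorphic as a group to O(1,n-1) ⋉ ℝ^n, via the map sending (Â, v) ∈ O(1,n-1) ⋉ ℝ^n to the projective class of the block matrix with upper-left n×n block Â, last column (0,...,0,1)^T, and last row (vᵀJÂ related entries, 1) — concretely, the matrix A with A_{ij} = Â_{ij} for i,j < n, A_{in} = 0 for i < n, A_{nn} = 1, and A_{nj} = (J v)ᵀ Â entries in the bottom row, where J = diag(−1,1,...,1). -/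

import Mathlib

open scoped BigOperators

/-- The Minkowski bilinear form of signature `(1,n-1)` on `ℝⁿ`. -/
noncomputable def mink (n : ℕ) (x y : Fin n → ℝ) : ℝ :=
  ∑ i : Fin n, (if (i : ℕ) = 0 then (-1 : ℝ) else 1) * x i * y i

/-- `Â ∈ O(1,n-1)`: the matrix `Â` preserves the Minkowski form. -/
def InMinkO (n : ℕ) (A : Matrix (Fin n) (Fin n) ℝ) : Prop :=
  ∀ x y : Fin n → ℝ, mink n (A.mulVec x) (A.mulVec y) = mink n x y

/-- The degenerate quadratic form `q₀(x) = −x₀² + x₁² + ⋯ + x_{n-1}²` on `ℝ^{n+1}`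
(not involving the last coordinate `xₙ`). -/
noncomputable def q0 (n : ℕ) (x : Fin (n + 1) → ℝ) : ℝ :=
  ∑ i : Fin (n + 1),
    (if i = Fin.last n then (0 : ℝ) else if (i : ℕ) = 0 then -1 else 1) * x i * x i

/-- The distinguished vector `eₙ` of `ℝ^{n+1}`. -/
noncomputable def eLast (n : ℕ) : Fin (n + 1) → ℝ := Pi.single (Fin.last n) 1

/-- The half-pipe duality map `φ : O(1,n-1) ⋉ ℝⁿ → M_{n+1}(ℝ)`, sending `(Â, v)` to the
block matrix with upper-left `n×n` block `Â`, last column `(0,…,0,1)ᵀ`, and bottom row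
`((Jv)ᵀÂ, 1)` with `J = diag(−1,1,…,1)`. -/
noncomputable def phiHP (n : ℕ) (A : Matrix (Fin n) (Fin n) ℝ) (v : Fin n → ℝ) :
    Matrix (Fin (n + 1)) (Fin (n + 1)) ℝ :=
  Matrix.of fun i j =>
    if hi : (i : ℕ) < n then
      if hj : (j : ℕ) < n then A ⟨i, hi⟩ ⟨j, hj⟩ else 0
    else
      if hj : (j : ℕ) < n then
        ∑ k : Fin n, ((if (k : ℕ) = 0 then (-1 : ℝ) else 1) * v k) * A k ⟨j, hj⟩
      else 1

/-!
In coordinates `(y, t) ∈ ℝⁿ × ℝ` the matrix `φ(Â, v)` acts by `(y, t) ↦ (Â y, ⟨v, Â y⟩ + t)`,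
where `⟨·,·⟩` is the Minkowski form, and `q₀(y, t) = ⟨y, y⟩`. Invariance of `q₀` and of
`eₙ = (0, 1)` is then immediate, and composing two such maps gives the semidirect-product law
because `⟨w, B̂ y⟩ = ⟨Â w, Â B̂ y⟩`. The corner entry `1` forces the scalar in an identity
`φ(Â, v) = c φ(B̂, w)` to be `1`, after which `v` is recovered from the functional
`y ↦ ⟨v, Â y⟩` by nondegeneracy of the form. Conversely, if `M` preserves `q₀` and
`M eₙ = d eₙ` with `d = ±1`, then `M (y, t) = (Â y, b ⬝ y + d t)`; polarization puts `Â` in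
`O(1,n-1)`, and `M = d φ(dÂ, v)` for the `v` with `⟨v, dÂ y⟩ = d b ⬝ y`.
-/

open Matrix

section Snoc

variable {n : ℕ}

lemma Fin.smul_snoc {M α : Type*} [SMul M α] (c : M) (y : Fin n → α) (t : α) :
    c • (Fin.snoc y t : Fin (n + 1) → α) = Fin.snoc (c • y) (c • t) := by
  ext i
  induction i using Fin.lastCases <;> simp

lemma Matrix.ext_of_mulVec_snoc {m R : Type*} [NonAssocSemiring R]
    {M N : Matrix m (Fin (n + 1)) R} (h : ∀ y t, M *ᵥ Fin.snoc y t = N *ᵥ Fin.snoc y t) :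
    M = N :=
  ext_iff_mulVec.2 fun x => by
    simpa only [Fin.snoc_init_self] using h (Fin.init x) (x (Fin.last n))

end Snoc

section MinkowskiForm

variable {n : ℕ}

lemma mink_comm (x y : Fin n → ℝ) : mink n x y = mink n y x :=
  Finset.sum_congr rfl fun _ _ => by ring

lemma mink_add_left (x y z : Fin n → ℝ) : mink n (x + y) z = mink n x z + mink n y z := by
  simp only [mink, ← Finset.sum_add_distrib, Pi.add_apply]
  exact Finset.sum_congr rfl fun _ _ => by ring

lemma mink_add_right (x y z : Fin n → ℝ) : mink n x (y + z) = mink n x y + mink n x z := by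
  rw [mink_comm, mink_add_left, mink_comm y, mink_comm z]

lemma mink_smul_left (c : ℝ) (x y : Fin n → ℝ) : mink n (c • x) y = c * mink n x y := by
  simp only [mink, Finset.mul_sum, Pi.smul_apply, smul_eq_mul]
  exact Finset.sum_congr rfl fun _ _ => by ring

lemma mink_smul_right (c : ℝ) (x y : Fin n → ℝ) : mink n x (c • y) = c * mink n x y := by
  rw [mink_comm, mink_smul_left, mink_comm]

lemma mink_zero_left (y : Fin n → ℝ) : mink n 0 y = 0 := by
  simpa using mink_smul_left 0 0 y

lemma mink_zero_right (x : Fin n → ℝ) : mink n x 0 = 0 := by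
  rw [mink_comm, mink_zero_left]

lemma mink_single_one (x : Fin n → ℝ) (i : Fin n) :
    mink n x (Pi.single i 1) = (if (i : ℕ) = 0 then -1 else 1) * x i := by
  simp [mink, Pi.single_apply]

lemma eq_of_forall_mink_eq {x y : Fin n → ℝ} (h : ∀ z, mink n x z = mink n y z) : x = y := by
  funext i
  have := h (Pi.single i 1)
  simp only [mink_single_one] at this
  split_ifs at this <;> linarith

lemma exists_mink_eq_dotProduct (b : Fin n → ℝ) : ∃ v, ∀ y, mink n v y = b ⬝ᵥ y := by
  refine ⟨fun i => (if (i : ℕ) = 0 then -1 else 1) * b i, fun y => ?_⟩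
  refine Finset.sum_congr rfl fun i _ => ?_
  by_cases hi : (i : ℕ) = 0 <;> simp [hi]

end MinkowskiForm

section LorentzGroup

variable {n : ℕ} {A : Matrix (Fin n) (Fin n) ℝ}

lemma inMinkO_of_forall_mink_self (h : ∀ x, mink n (A *ᵥ x) (A *ᵥ x) = mink n x x) :
    InMinkO n A := by
  intro x y
  have hxy := h (x + y)
  simp only [mulVec_add, mink_add_left, mink_add_right, h x, h y] at hxy
  linarith [mink_comm x y, mink_comm (A *ᵥ x) (A *ᵥ y)]

lemma InMinkO.smul (hA : InMinkO n A) {c : ℝ} (hc : c * c = 1) : InMinkO n (c • A) := by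
  intro x y
  rw [smul_mulVec, smul_mulVec, mink_smul_left, mink_smul_right, ← mul_assoc, hc, one_mul,
    hA]

lemma InMinkO.isUnit (hA : InMinkO n A) : IsUnit A :=
  mulVec_injective_iff_isUnit.1 fun x y hxy =>
    eq_of_forall_mink_eq fun z => by rw [← hA, hxy, hA]

lemma InMinkO.exists_mink_mulVec_eq (hA : InMinkO n A) (b : Fin n → ℝ) :
    ∃ v, ∀ y, mink n v (A *ᵥ y) = b ⬝ᵥ y := by
  obtain ⟨v, hv⟩ := exists_mink_eq_dotProduct (b ᵥ* A⁻¹)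
  refine ⟨v, fun y => ?_⟩
  rw [hv, dotProduct_mulVec, vecMul_vecMul,
    nonsing_inv_mul _ ((isUnit_iff_isUnit_det A).1 hA.isUnit), vecMul_one]

end LorentzGroup


section HalfPipe

variable {n : ℕ} {A : Matrix (Fin n) (Fin n) ℝ} {v : Fin n → ℝ}

lemma q0_snoc (y : Fin n → ℝ) (t : ℝ) : q0 n (Fin.snoc y t) = mink n y y := by
  simp only [q0, mink, Fin.sum_univ_castSucc, Fin.snoc_castSucc, Fin.val_castSucc,
    (Fin.castSucc_lt_last _).ne, if_false, if_true, zero_mul, add_zero]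

lemma eLast_eq_snoc : eLast n = Fin.snoc 0 1 := by
  ext i
  induction i using Fin.lastCases <;> simp [eLast, (Fin.castSucc_lt_last _).ne]

lemma phiHP_castSucc_castSucc (i j : Fin n) : phiHP n A v i.castSucc j.castSucc = A i j := by
  simp [phiHP]

lemma phiHP_castSucc_last (i : Fin n) : phiHP n A v i.castSucc (Fin.last n) = 0 := by
  simp [phiHP]

lemma phiHP_last_castSucc (j : Fin n) :
    phiHP n A v (Fin.last n) j.castSucc = mink n v (Aᵀ j) := by
  simp [phiHP, mink]

lemma phiHP_last_last : phiHP n A v (Fin.last n) (Fin.last n) = 1 := by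
  simp [phiHP]

lemma phiHP_mulVec_snoc (y : Fin n → ℝ) (t : ℝ) :
    phiHP n A v *ᵥ Fin.snoc y t = Fin.snoc (A *ᵥ y) (mink n v (A *ᵥ y) + t) := by
  ext i
  induction i using Fin.lastCases with
  | last =>
    simp only [mulVec, dotProduct, Fin.sum_univ_castSucc, phiHP_last_castSucc, phiHP_last_last,
      Fin.snoc_castSucc, Fin.snoc_last, one_mul, mink, Finset.mul_sum, Finset.sum_mul]
    rw [Finset.sum_comm]
    congr 1
    exact Finset.sum_congr rfl fun _ _ => Finset.sum_congr rfl fun _ _ => by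
      simp only [transpose_apply]; ring
  | cast i =>
    simp [mulVec, dotProduct, Fin.sum_univ_castSucc, phiHP_castSucc_castSucc, phiHP_castSucc_last]

lemma phiHP_mulVec_eLast : phiHP n A v *ᵥ eLast n = eLast n := by
  rw [eLast_eq_snoc, phiHP_mulVec_snoc, mulVec_zero, mink_zero_right, zero_add]

lemma q0_phiHP_mulVec (hA : InMinkO n A) (x : Fin (n + 1) → ℝ) :
    q0 n (phiHP n A v *ᵥ x) = q0 n x := by
  rw [← Fin.snoc_init_self x, phiHP_mulVec_snoc, q0_snoc, q0_snoc, hA]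

lemma phiHP_one_zero : phiHP n 1 0 = 1 :=
  ext_of_mulVec_snoc fun y t => by
    rw [phiHP_mulVec_snoc, one_mulVec, one_mulVec, mink_zero_left, zero_add]

lemma phiHP_mul (hA : InMinkO n A) (B : Matrix (Fin n) (Fin n) ℝ) (w : Fin n → ℝ) :
    phiHP n A v * phiHP n B w = phiHP n (A * B) (A *ᵥ w + v) := by
  refine ext_of_mulVec_snoc fun y t => ?_
  rw [← mulVec_mulVec, phiHP_mulVec_snoc, phiHP_mulVec_snoc, phiHP_mulVec_snoc, ← mulVec_mulVec,
    mink_add_left, hA]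
  congr 1
  ring

lemma isUnit_phiHP (hA : InMinkO n A) : IsUnit (phiHP n A v) := by
  have hA' : IsUnit A.det := (isUnit_iff_isUnit_det A).1 hA.isUnit
  have hinv : phiHP n A v * phiHP n A⁻¹ (-(A⁻¹ *ᵥ v)) = 1 := by
    rw [phiHP_mul hA, mul_nonsing_inv A hA', mulVec_neg, mulVec_mulVec, mul_nonsing_inv A hA',
      one_mulVec, neg_add_cancel, phiHP_one_zero]
  exact (isUnit_iff_isUnit_det _).2 (isUnit_det_of_right_inverse hinv)

lemma eq_of_phiHP_eq_smul_phiHP (hA : InMinkO n A) {B : Matrix (Fin n) (Fin n) ℝ}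
    {w : Fin n → ℝ} {c : ℝ} (h : phiHP n A v = c • phiHP n B w) : A = B ∧ v = w := by
  obtain rfl : c = 1 := by
    simpa [phiHP_last_last] using (congrFun (congrFun h (Fin.last n)) (Fin.last n)).symm
  rw [one_smul] at h
  have hy : ∀ y, A *ᵥ y = B *ᵥ y ∧ mink n v (A *ᵥ y) = mink n w (B *ᵥ y) := fun y => by
    simpa [phiHP_mulVec_snoc] using congrArg (· *ᵥ Fin.snoc y 0) h
  obtain rfl : A = B := ext_iff_mulVec.2 fun y => (hy y).1
  refine ⟨rfl, eq_of_forall_mink_eq fun z => ?_⟩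
  obtain ⟨y, rfl⟩ := mulVec_surjective_iff_isUnit.2 hA.isUnit z
  exact (hy y).2

end HalfPipe

section Classification

variable {n : ℕ} {M : Matrix (Fin (n + 1)) (Fin (n + 1)) ℝ} {d : ℝ}

lemma mulVec_snoc_of_mulVec_eLast (he : M *ᵥ eLast n = d • eLast n) (y : Fin n → ℝ) (t : ℝ) :
    M *ᵥ Fin.snoc y t = Fin.snoc (M.submatrix Fin.castSucc Fin.castSucc *ᵥ y)
      ((fun j => M (Fin.last n) j.castSucc) ⬝ᵥ y + d * t) := by
  have hcol (i) : M i (Fin.last n) = d * eLast n i := by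
    simpa using congrFun ((mulVec_single_one M (Fin.last n)).symm.trans he) i
  ext i
  induction i using Fin.lastCases <;>
    simp [mulVec, dotProduct, Fin.sum_univ_castSucc, hcol, eLast]

lemma exists_eq_smul_phiHP (hq : ∀ x, q0 n (M *ᵥ x) = q0 n x) (hd : d * d = 1)
    (he : M *ᵥ eLast n = d • eLast n) :
    ∃ (A : Matrix (Fin n) (Fin n) ℝ) (v : Fin n → ℝ), InMinkO n A ∧ M = d • phiHP n A v := by
  have hM := mulVec_snoc_of_mulVec_eLast he
  set b : Fin n → ℝ := fun j => M (Fin.last n) j.castSucc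
  have hA : InMinkO n (M.submatrix Fin.castSucc Fin.castSucc) :=
    inMinkO_of_forall_mink_self fun y => by simpa [hM, q0_snoc] using hq (Fin.snoc y 0)
  obtain ⟨v, hv⟩ := (hA.smul hd).exists_mink_mulVec_eq (d • b)
  refine ⟨_, v, hA.smul hd, ext_of_mulVec_snoc fun y t => ?_⟩
  rw [smul_mulVec, phiHP_mulVec_snoc, hv, hM, Fin.smul_snoc, smul_mulVec, smul_smul, hd,
    one_smul, smul_dotProduct, smul_eq_mul, smul_eq_mul]
  congr 1
  linear_combination -(b ⬝ᵥ y) * hd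

end Classification

theorem stmt19_general (n : ℕ) :
    (∀ (A : Matrix (Fin n) (Fin n) ℝ) (v : Fin n → ℝ), InMinkO n A →
      (IsUnit (phiHP n A v) ∧
       (∀ x, q0 n ((phiHP n A v).mulVec x) = q0 n x) ∧
       (phiHP n A v).mulVec (eLast n) = eLast n)) ∧
    (phiHP n 1 0 = 1) ∧
    (∀ (A B : Matrix (Fin n) (Fin n) ℝ) (v w : Fin n → ℝ), InMinkO n A → InMinkO n B →
      phiHP n A v * phiHP n B w = phiHP n (A * B) (A.mulVec w + v)) ∧
    (∀ (A B : Matrix (Fin n) (Fin n) ℝ) (v w : Fin n → ℝ) (c : ℝ),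
      InMinkO n A → InMinkO n B → phiHP n A v = c • phiHP n B w → A = B ∧ v = w) ∧
    (∀ M : Matrix (Fin (n + 1)) (Fin (n + 1)) ℝ, IsUnit M →
      (∀ x, q0 n (M.mulVec x) = q0 n x) →
      (M.mulVec (eLast n) = eLast n ∨ M.mulVec (eLast n) = -eLast n) →
      ∃ (A : Matrix (Fin n) (Fin n) ℝ) (v : Fin n → ℝ) (c : ℝ),
        c ≠ 0 ∧ InMinkO n A ∧ M = c • phiHP n A v) := by
  refine ⟨fun A v hA => ⟨isUnit_phiHP hA, q0_phiHP_mulVec hA, phiHP_mulVec_eLast⟩,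
    phiHP_one_zero, fun A B v w hA _ => phiHP_mul hA B w,
    fun A B v w c hA _ h => eq_of_phiHP_eq_smul_phiHP hA h, fun M _ hq he => ?_⟩
  obtain ⟨d, hd, he⟩ : ∃ d : ℝ, d * d = 1 ∧ M *ᵥ eLast n = d • eLast n := by
    rcases he with he | he
    · exact ⟨1, by norm_num, by rw [he, one_smul]⟩
    · exact ⟨-1, by norm_num, by rw [he, neg_one_smul]⟩
  obtain ⟨A, v, hA, rfl⟩ := exists_eq_smul_phiHP hq hd he
  exact ⟨A, v, d, left_ne_zero_of_mul_eq_one hd, hA, rfl⟩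

/-- The group `G_{HP^n} = {[A] ∈ PO(q₀) : A eₙ = ± eₙ}` of half-pipe transformations is
isomorphic to `O(1,n-1) ⋉ ℝⁿ` via the block-matrix map `φ`:  `φ` lands in `G_{HP^n}`, is
multiplicative for the semidirect-product multiplication `(Â,v)(B̂,w) = (ÂB̂, Âw + v)`,
sends the identity to the identity, is injective up to projective rescaling, and every
invertible matrix preserving `q₀` with `M eₙ = ± eₙ` is a scalar multiple of some
`φ(Â,v)`. -/
theorem stmt19 (n : ℕ) (hn : 1 ≤ n) :
    (∀ (A : Matrix (Fin n) (Fin n) ℝ) (v : Fin n → ℝ), InMinkO n A →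
      (IsUnit (phiHP n A v) ∧
       (∀ x, q0 n ((phiHP n A v).mulVec x) = q0 n x) ∧
       (phiHP n A v).mulVec (eLast n) = eLast n)) ∧
    (phiHP n 1 0 = 1) ∧
    (∀ (A B : Matrix (Fin n) (Fin n) ℝ) (v w : Fin n → ℝ), InMinkO n A → InMinkO n B →
      phiHP n A v * phiHP n B w = phiHP n (A * B) (A.mulVec w + v)) ∧
    (∀ (A B : Matrix (Fin n) (Fin n) ℝ) (v w : Fin n → ℝ) (c : ℝ),
      InMinkO n A → InMinkO n B → phiHP n A v = c • phiHP n B w → A = B ∧ v = w) ∧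
    (∀ M : Matrix (Fin (n + 1)) (Fin (n + 1)) ℝ, IsUnit M →
      (∀ x, q0 n (M.mulVec x) = q0 n x) →
      (M.mulVec (eLast n) = eLast n ∨ M.mulVec (eLast n) = -eLast n) →
      ∃ (A : Matrix (Fin n) (Fin n) ℝ) (v : Fin n → ℝ) (c : ℝ),
        c ≠ 0 ∧ InMinkO n A ∧ M = c • phiHP n A v) :=
  stmt19_general n
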